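/- arXiv:1002.3680 — 9 statements merged into one kernel-verified Lean document; each statement's English description precedes it below -/
import Mathlib

section
/- For H ∈ (0,1), K ∈ (1,2) with HK ∈ (0,1), and all t ≥ s ≥ 0: 2^(1-K)·(t-s)^(2HK) ≤ (1/2^K)((2t^(2H))^K + (2s^(2H))^K - 2((t^(2H)+s^(2H))^K - (t-s)^(2HK))). -/
open Real

lemma key_rpow (a b p : ℝ) (ha : 0 ≤ a) (hb : 0 ≤ b) (hp : 1 ≤ p) :
    (a + b) ^ p ≤ 2 ^ (p - 1) * (a ^ p + b ^ p) := by
  have h := NNReal.rpow_add_le_mul_rpow_add_rpow ⟨a, ha⟩ ⟨b, hb⟩ hp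
  exact_mod_cast h

theorem stmt_2 (H K : ℝ) (hH : H ∈ Set.Ioo (0:ℝ) 1) (hK : K ∈ Set.Ioo (1:ℝ) 2)
    (hHK : H * K ∈ Set.Ioo (0:ℝ) 1)
    (s t : ℝ) (hs : 0 ≤ s) (hst : s ≤ t) :
    (2:ℝ) ^ (1 - K) * (t - s) ^ (2*H*K)
      ≤ (1 / (2:ℝ) ^ K) * ((2 * t ^ (2*H)) ^ K + (2 * s ^ (2*H)) ^ K
          - 2 * ((t ^ (2*H) + s ^ (2*H)) ^ K - (t - s) ^ (2*H*K))) := by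
  have ht : 0 ≤ t := hs.trans hst
  set a := t ^ (2*H) with hadef
  set b := s ^ (2*H) with hbdef
  set c := (t - s) ^ (2*H*K) with hcdef
  have ha : 0 ≤ a := rpow_nonneg ht _
  have hb : 0 ≤ b := rpow_nonneg hs _
  have hkey : (a + b) ^ K ≤ 2 ^ (K - 1) * (a ^ K + b ^ K) :=
    key_rpow a b K ha hb hK.1.le
  have h2K : (0:ℝ) < 2 ^ K := rpow_pos_of_pos two_pos K
  have hma : (2 * a) ^ K = 2 ^ K * a ^ K := mul_rpow (by norm_num) ha
  have hmb : (2 * b) ^ K = 2 ^ K * b ^ K := mul_rpow (by norm_num) hb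
  have h1 : (2:ℝ) ^ (1 - K) = 2 / 2 ^ K := by
    rw [rpow_sub two_pos, rpow_one]
  have h2 : (2:ℝ) ^ (K - 1) = 2 ^ K / 2 := by
    rw [rpow_sub two_pos, rpow_one]
  have hA : 2 * (a + b) ^ K ≤ 2 ^ K * (a ^ K + b ^ K) := by
    have h := mul_le_mul_of_nonneg_left hkey (le_of_lt two_pos)
    rw [h2] at h
    calc 2 * (a + b) ^ K ≤ 2 * (2 ^ K / 2 * (a ^ K + b ^ K)) := h
      _ = 2 ^ K * (a ^ K + b ^ K) := by ring
  rw [hma, hmb, h1, div_mul_eq_mul_div, one_div, inv_mul_eq_div,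
    div_le_div_iff₀ h2K h2K]
  nlinarith [mul_le_mul_of_nonneg_right hA h2K.le]
end

section
/- For H ∈ (0,1/2], K ∈ (1,2), and all t ≥ s ≥ 0: (1/2^K)((2t^(2H))^K + (2s^(2H))^K - 2((t^(2H)+s^(2H))^K - (t-s)^(2HK))) ≤ (t-s)^(2HK). -/
open Real

/-!
Write `a = t ^ (2H)` and `b = s ^ (2H)`. After clearing `2 ^ K` the claim reads
`2 ^ K (a ^ K + b ^ K) ≤ 2 (a + b) ^ K + (2 ^ K - 2) (t - s) ^ (2HK)`, and subadditivity of
`x ↦ x ^ (2H)` gives `a - b ≤ (t - s) ^ (2H)`. So it suffices to have the Clarkson-type inequality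
`(u + v) ^ K + (u - v) ^ K ≤ 2 u ^ K + (2 ^ K - 2) v ^ K` for `0 ≤ v ≤ u` and `1 ≤ K ≤ 2`
(with `u = (a + b) / 2`, `v = (a - b) / 2`). It is an equality at `u = v`, and its `u`-derivative
has the sign of `2 u ^ (K - 1) - (u + v) ^ (K - 1) - (u - v) ^ (K - 1) ≥ 0`, by concavity of
`x ↦ x ^ (K - 1)`.
-/

lemma rpow_sub_rpow_le_sub_rpow {p s t : ℝ} (hs : 0 ≤ s) (hst : s ≤ t) (hp0 : 0 ≤ p)
    (hp1 : p ≤ 1) : t ^ p - s ^ p ≤ (t - s) ^ p := by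
  have h := rpow_add_le_add_rpow (sub_nonneg.2 hst) hs hp0 hp1
  rw [sub_add_cancel] at h
  linarith

lemma rpow_add_rpow_le_two_mul_rpow_midpoint {p a b : ℝ} (ha : 0 ≤ a) (hb : 0 ≤ b)
    (hp0 : 0 ≤ p) (hp1 : p ≤ 1) : a ^ p + b ^ p ≤ 2 * ((a + b) / 2) ^ p := by
  have h := (concaveOn_rpow hp0 hp1).2 (Set.mem_Ici.2 ha) (Set.mem_Ici.2 hb)
    (by norm_num : (0:ℝ) ≤ 1 / 2) (by norm_num : (0:ℝ) ≤ 1 / 2) (by norm_num)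
  rw [smul_eq_mul, smul_eq_mul, smul_eq_mul, smul_eq_mul,
    show 1 / 2 * a + 1 / 2 * b = (a + b) / 2 by ring] at h
  linarith

lemma add_rpow_add_sub_rpow_le {K u v : ℝ} (hK1 : 1 ≤ K) (hK2 : K ≤ 2) (hv : 0 ≤ v)
    (hvu : v ≤ u) : (u + v) ^ K + (u - v) ^ K ≤ 2 * u ^ K + (2 ^ K - 2) * v ^ K := by
  set g : ℝ → ℝ := fun x ↦ 2 * x ^ K + (2 ^ K - 2) * v ^ K - (x + v) ^ K - (x - v) ^ K
  have hg' : ∀ x, HasDerivAt g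
      (2 * (K * x ^ (K - 1)) - 1 * K * (x + v) ^ (K - 1) - 1 * K * (x - v) ^ (K - 1)) x :=
    fun x ↦ ((((hasDerivAt_rpow_const (Or.inr hK1)).const_mul 2).add_const _).sub
      (((hasDerivAt_id' x).add_const v).rpow_const (Or.inr hK1))).sub
      (((hasDerivAt_id' x).sub_const v).rpow_const (Or.inr hK1))
  have hg_mono : MonotoneOn g (Set.Ici v) := by
    refine monotoneOn_of_hasDerivWithinAt_nonneg (convex_Ici v)
      (fun x _ ↦ (hg' x).continuousAt.continuousWithinAt) (fun x _ ↦ (hg' x).hasDerivWithinAt)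
      fun x hx ↦ ?_
    rw [interior_Ici, Set.mem_Ioi] at hx
    have hmid := rpow_add_rpow_le_two_mul_rpow_midpoint (by linarith : 0 ≤ x + v)
      (by linarith : 0 ≤ x - v) (by linarith : 0 ≤ K - 1) (by linarith : K - 1 ≤ 1)
    rw [show (x + v + (x - v)) / 2 = x by ring] at hmid
    linarith [mul_le_mul_of_nonneg_left hmid (by linarith : 0 ≤ K)]
  have hgv : g v = 0 := by
    simp only [g, sub_self, ← two_mul, mul_rpow zero_le_two hv,
      zero_rpow (by linarith : K ≠ 0)]
    ring
  have h := hg_mono Set.self_mem_Ici hvu hvu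
  rw [hgv] at h
  linarith

lemma two_rpow_mul_add_rpow_le {K a b : ℝ} (hK1 : 1 ≤ K) (hK2 : K ≤ 2) (hb : 0 ≤ b)
    (hba : b ≤ a) : 2 ^ K * (a ^ K + b ^ K) ≤ 2 * (a + b) ^ K + (2 ^ K - 2) * (a - b) ^ K := by
  have h := add_rpow_add_sub_rpow_le hK1 hK2 (u := (a + b) / 2) (v := (a - b) / 2)
    (by linarith) (by linarith)
  rw [show (a + b) / 2 + (a - b) / 2 = a by ring, show (a + b) / 2 - (a - b) / 2 = b by ring,
    div_rpow (by linarith) zero_le_two, div_rpow (by linarith) zero_le_two] at h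
  have h2K : (0:ℝ) < 2 ^ K := by positivity
  calc 2 ^ K * (a ^ K + b ^ K)
      ≤ 2 ^ K * (2 * ((a + b) ^ K / 2 ^ K) + (2 ^ K - 2) * ((a - b) ^ K / 2 ^ K)) :=
        mul_le_mul_of_nonneg_left h h2K.le
    _ = 2 * (a + b) ^ K + (2 ^ K - 2) * (a - b) ^ K := by field_simp

theorem stmt_3 (H K : ℝ) (hH : H ∈ Set.Ioc (0:ℝ) (1/2)) (hK : K ∈ Set.Ioo (1:ℝ) 2)
    (s t : ℝ) (hs : 0 ≤ s) (hst : s ≤ t) :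
    (1 / (2:ℝ) ^ K) * ((2 * t ^ (2*H)) ^ K + (2 * s ^ (2*H)) ^ K
        - 2 * ((t ^ (2*H) + s ^ (2*H)) ^ K - (t - s) ^ (2*H*K)))
      ≤ (t - s) ^ (2*H*K) := by
  obtain ⟨hH0, hH2⟩ := hH
  obtain ⟨hK1, hK2⟩ := hK
  have h2H : 0 ≤ 2 * H := by linarith
  have hsH : 0 ≤ s ^ (2*H) := rpow_nonneg hs _
  have hsHtH : s ^ (2*H) ≤ t ^ (2*H) := rpow_le_rpow hs hst h2H
  have hincr : (t ^ (2*H) - s ^ (2*H)) ^ K ≤ (t - s) ^ (2*H*K) := by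
    rw [rpow_mul (sub_nonneg.2 hst)]
    exact rpow_le_rpow (sub_nonneg.2 hsHtH)
      (rpow_sub_rpow_le_sub_rpow hs hst h2H (by linarith)) (by linarith)
  have hclarkson := two_rpow_mul_add_rpow_le hK1.le hK2.le hsH hsHtH
  have h2K : (2:ℝ) ≤ 2 ^ K := by
    simpa using rpow_le_rpow_of_exponent_le one_le_two hK1.le
  rw [mul_rpow zero_le_two (hsH.trans hsHtH), mul_rpow zero_le_two hsH, one_div_mul_eq_div,
    div_le_iff₀ (by positivity)]
  linarith [mul_le_mul_of_nonneg_left hincr (sub_nonneg.2 h2K)]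
end

section
/- For H ∈ (1/2,1), K ∈ (1,2) with HK ∈ (0,1), and all t ≥ s ≥ 0: (1/2^K)((2t^(2H))^K + (2s^(2H))^K - 2((t^(2H)+s^(2H))^K - (t-s)^(2HK))) ≤ 2^(2-K)·(t-s)^(2HK). -/
/-!
With `p = 2H`, the claim is `2^(K-1) (t^(pK) + s^(pK)) ≤ (t^p + s^p)^K + (t-s)^(pK)`. For fixed `s`
both sides agree at `t = s`, and their difference is nondecreasing in `t`. Normalising by `t`, the
sign of its derivative comes down to `2^(K-1) ≤ (1 + x^p)^(K-1) + (1-x)^(pK-1)` on `[0, 1]`, which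
follows from the chord bound `(1 + y)^(K-1) ≥ 1 + (2^(K-1) - 1) y`, Bernoulli's `x^p ≥ 1 - p(1-x)`,
`(1-x)^(pK-1) ≥ 1-x`, and `p (2^(K-1) - 1) ≤ p (K-1) ≤ 1`.
-/

open Real

lemma one_add_two_rpow_sub_one_mul_le_one_add_rpow {q y : ℝ} (hq0 : 0 ≤ q) (hq1 : q ≤ 1)
    (hy0 : 0 ≤ y) (hy1 : y ≤ 1) : 1 + (2 ^ q - 1) * y ≤ (1 + y) ^ q := by
  have h := (concaveOn_rpow hq0 hq1).2 (Set.mem_Ici.2 zero_le_one)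
    (Set.mem_Ici.2 zero_le_two) (sub_nonneg.2 hy1) hy0 (sub_add_cancel 1 y)
  simp only [smul_eq_mul, one_rpow] at h
  rw [show (1 - y) * 1 + y * 2 = 1 + y by ring] at h
  linarith

lemma two_rpow_le_one_add_rpow_rpow_add_one_sub_rpow {p q r x : ℝ} (hp : 1 ≤ p) (hq0 : 0 ≤ q)
    (hq1 : q ≤ 1) (hpq : p * q ≤ 1) (hr0 : 0 ≤ r) (hr1 : r ≤ 1) (hx0 : 0 ≤ x) (hx1 : x ≤ 1) :
    (2 : ℝ) ^ q ≤ (1 + x ^ p) ^ q + (1 - x) ^ r := by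
  have hchord := one_add_two_rpow_sub_one_mul_le_one_add_rpow hq0 hq1 (rpow_nonneg hx0 p)
    (rpow_le_one hx0 hx1 (by linarith))
  have hbernoulli : 1 + p * (x - 1) ≤ x ^ p := by
    simpa using one_add_mul_self_le_rpow_one_add (show -1 ≤ x - 1 by linarith) hp
  have hdist : 1 - x ≤ (1 - x) ^ r := by
    simpa using rpow_le_rpow_of_exponent_ge' (sub_nonneg.2 hx1) (by linarith) hr0 hr1
  have hconst : (2 : ℝ) ^ q ≤ 1 + q := by
    simpa [one_add_one_eq_two] using rpow_one_add_le_one_add_mul_self (s := 1) (by norm_num) hq0 hq1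
  have hconst' : 1 ≤ (2 : ℝ) ^ q := one_le_rpow one_le_two hq0
  nlinarith [mul_le_mul_of_nonneg_left hbernoulli (sub_nonneg.2 hconst'),
    mul_le_mul_of_nonneg_left hconst (by linarith : 0 ≤ p),
    mul_nonneg (sub_nonneg.2 hx1) (sub_nonneg.2 hx1)]

lemma two_rpow_mul_rpow_sub_one_le {p K s u : ℝ} (hp : 1 ≤ p) (hK : 1 ≤ K) (hpK : p * K ≤ 2)
    (hs : 0 ≤ s) (hsu : s ≤ u) (hu : 0 < u) :
    (2 : ℝ) ^ (K - 1) * u ^ (p * K - 1)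
      ≤ u ^ (p - 1) * (u ^ p + s ^ p) ^ (K - 1) + (u - s) ^ (p * K - 1) := by
  have hx0 : 0 ≤ s / u := div_nonneg hs hu.le
  have hKp : K ≤ p * K := le_mul_of_one_le_left (by linarith) hp
  have hnorm := two_rpow_le_one_add_rpow_rpow_add_one_sub_rpow (r := p * K - 1) hp
    (sub_nonneg.2 hK) (by linarith) (by nlinarith) (by linarith) (by linarith) hx0
    ((div_le_one hu).2 hsu)
  have hsplit : u ^ (p * K - 1) = u ^ (p - 1) * (u ^ p) ^ (K - 1) := by
    rw [← rpow_mul hu.le, ← rpow_add hu]; ring_nf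
  have hfirst : (u ^ p) ^ (K - 1) * (1 + (s / u) ^ p) ^ (K - 1) = (u ^ p + s ^ p) ^ (K - 1) := by
    rw [← mul_rpow (rpow_nonneg hu.le p) (by positivity), div_rpow hs hu.le,
      mul_add, mul_div_cancel₀ _ (rpow_pos_of_pos hu p).ne', mul_one]
  have hsecond : u ^ (p * K - 1) * (1 - s / u) ^ (p * K - 1) = (u - s) ^ (p * K - 1) := by
    rw [← mul_rpow hu.le (sub_nonneg.2 ((div_le_one hu).2 hsu)), mul_sub,
      mul_div_cancel₀ _ hu.ne', mul_one]
  calc (2 : ℝ) ^ (K - 1) * u ^ (p * K - 1)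
      ≤ ((1 + (s / u) ^ p) ^ (K - 1) + (1 - s / u) ^ (p * K - 1)) * u ^ (p * K - 1) :=
        mul_le_mul_of_nonneg_right hnorm (rpow_nonneg hu.le _)
    _ = u ^ (p - 1) * (u ^ p + s ^ p) ^ (K - 1) + (u - s) ^ (p * K - 1) := by
        rw [← hfirst, ← hsecond, hsplit]; ring

theorem two_rpow_mul_rpow_add_rpow_le {p K s t : ℝ} (hp : 1 ≤ p) (hK : 1 ≤ K) (hpK : p * K ≤ 2)
    (hs : 0 ≤ s) (hst : s ≤ t) :
    (2 : ℝ) ^ (K - 1) * (t ^ (p * K) + s ^ (p * K)) ≤ (t ^ p + s ^ p) ^ K + (t - s) ^ (p * K) := by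
  have hpK1 : 1 ≤ p * K := one_le_mul_of_one_le_of_one_le hp hK
  set G : ℝ → ℝ := fun u ↦
    (u ^ p + s ^ p) ^ K + (u - s) ^ (p * K) - 2 ^ (K - 1) * (u ^ (p * K) + s ^ (p * K))
  have hG : ∀ u, HasDerivAt G (p * K * (u ^ (p - 1) * (u ^ p + s ^ p) ^ (K - 1)
      + (u - s) ^ (p * K - 1) - 2 ^ (K - 1) * u ^ (p * K - 1))) u := fun u ↦ by
    have hbase := ((hasDerivAt_rpow_const (x := u) (Or.inr hp)).add_const (s ^ p)).rpow_const
      (Or.inr hK)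
    have hdiff := ((hasDerivAt_id u).sub_const s).rpow_const (Or.inr hpK1)
    have hpow := ((hasDerivAt_rpow_const (x := u) (Or.inr hpK1)).add_const (s ^ (p * K))).const_mul
      ((2 : ℝ) ^ (K - 1))
    exact ((hbase.add hdiff).sub hpow).congr_deriv (by simp only [id]; ring)
  have hmono : MonotoneOn G (Set.Ici s) := by
    refine monotoneOn_of_deriv_nonneg (convex_Ici s)
      (continuous_iff_continuousAt.2 fun u ↦ (hG u).continuousAt).continuousOn
      (fun u _ ↦ (hG u).differentiableAt.differentiableWithinAt) fun u hu ↦ ?_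
    rw [interior_Ici] at hu
    rw [(hG u).deriv]
    exact mul_nonneg (by linarith)
      (by linarith [two_rpow_mul_rpow_sub_one_le hp hK hpK hs hu.le (hs.trans_lt hu)])
  have hGs : G s = 0 := by
    have h2 : (2 : ℝ) ^ (K - 1) * 2 = 2 ^ K := by
      rw [← rpow_add_one two_ne_zero, sub_add_cancel]
    simp only [G, sub_self, zero_rpow (by linarith : p * K ≠ 0), ← two_mul,
      mul_rpow zero_le_two (rpow_nonneg hs p), ← rpow_mul hs]
    linear_combination (-(s ^ (p * K))) * h2
  have hGt := hmono Set.self_mem_Ici hst hst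
  simp only [G, hGs] at hGt
  linarith

theorem stmt_4 (H K : ℝ) (hH : H ∈ Set.Ioo (1/2 : ℝ) 1) (hK : K ∈ Set.Ioo (1:ℝ) 2)
    (hHK : H * K ∈ Set.Ioo (0:ℝ) 1)
    (s t : ℝ) (hs : 0 ≤ s) (hst : s ≤ t) :
    (1 / (2:ℝ) ^ K) * ((2 * t ^ (2*H)) ^ K + (2 * s ^ (2*H)) ^ K
        - 2 * ((t ^ (2*H) + s ^ (2*H)) ^ K - (t - s) ^ (2*H*K)))
      ≤ (2:ℝ) ^ (2 - K) * (t - s) ^ (2*H*K) := by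
  have hkey := two_rpow_mul_rpow_add_rpow_le (p := 2 * H) (by linarith [hH.1]) hK.1.le
    (by linarith [hHK.2]) hs hst
  have hpow : ∀ x : ℝ, 0 ≤ x → (2 * x ^ (2 * H)) ^ K = 2 ^ K * x ^ (2 * H * K) := fun x hx ↦ by
    rw [mul_rpow zero_le_two (rpow_nonneg hx _), ← rpow_mul hx]
  have h2K : (0 : ℝ) < 2 ^ K := rpow_pos_of_pos two_pos K
  have hK1 : (2 : ℝ) ^ (K - 1) = 2 ^ K / 2 := rpow_sub_one two_ne_zero K
  have hK2 : (2 : ℝ) ^ (2 - K) = 4 / 2 ^ K := by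
    rw [rpow_sub two_pos, rpow_two]; norm_num
  rw [hK1] at hkey
  rw [hpow t (hs.trans hst), hpow s hs, hK2, div_mul_eq_mul_div, div_mul_eq_mul_div,
    div_le_div_iff_of_pos_right h2K]
  linarith
end

section
/- For H ∈ (1/2,1), K ∈ (1,2) with HK < 1, and all t ≥ s ≥ 0: t^(2HK) + s^(2HK) ≤ 2^(1-K)·((t^(2H)+s^(2H))^K + (t-s)^(2HK)). -/
open Real

lemma aux_subadd {x y p : ℝ} (hx : 0 ≤ x) (hy : 0 ≤ y) (hp0 : 0 ≤ p) (hp1 : p ≤ 1) :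
    (x + y) ^ p ≤ x ^ p + y ^ p := by
  have h := NNReal.rpow_add_le_add_rpow (x.toNNReal) (y.toNNReal) hp0 hp1
  have h' := NNReal.coe_le_coe.2 h
  rw [← Real.toNNReal_add hx hy] at h'
  rw [NNReal.coe_add, NNReal.coe_rpow, NNReal.coe_rpow, NNReal.coe_rpow,
    Real.coe_toNNReal _ hx, Real.coe_toNNReal _ hy,
    Real.coe_toNNReal _ (by positivity : (0:ℝ) ≤ x + y)] at h'
  exact h'

lemma aux_pm {x y p : ℝ} (hx : 0 ≤ x) (hy : 0 ≤ y) (hp : 1 ≤ p) :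
    (x + y) ^ p ≤ 2 ^ (p-1) * (x ^ p + y ^ p) := by
  have h := NNReal.rpow_add_le_mul_rpow_add_rpow (x.toNNReal) (y.toNNReal) hp
  have h' := NNReal.coe_le_coe.2 h
  rw [← Real.toNNReal_add hx hy] at h'
  rw [NNReal.coe_mul, NNReal.coe_add, NNReal.coe_rpow, NNReal.coe_rpow, NNReal.coe_rpow,
    NNReal.coe_rpow, NNReal.coe_ofNat,
    Real.coe_toNNReal _ hx, Real.coe_toNNReal _ hy,
    Real.coe_toNNReal _ (by positivity : (0:ℝ) ≤ x + y)] at h'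
  exact h'

theorem stmt_5 (H K : ℝ) (hH : H ∈ Set.Ioo (1/2 : ℝ) 1) (hK : K ∈ Set.Ioo (1:ℝ) 2)
    (hHK : H * K < 1)
    (s t : ℝ) (hs : 0 ≤ s) (hst : s ≤ t) :
    t ^ (2*H*K) + s ^ (2*H*K)
      ≤ (2:ℝ) ^ (1 - K) * ((t ^ (2*H) + s ^ (2*H)) ^ K + (t - s) ^ (2*H*K)) := by
  obtain ⟨hH1, hH2⟩ := hH
  obtain ⟨hK1, hK2⟩ := hK
  have ht : 0 ≤ t := hs.trans hst
  have hts : 0 ≤ t - s := by linarith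
  have hK0 : (0:ℝ) < K := by linarith
  have hh0 : 0 < H * K := by positivity
  have hh1 : H * K ≤ 1 := hHK.le
  set T := t ^ (H*K) with hT
  set S := s ^ (H*K) with hS
  set D := (t - s) ^ (H*K) with hD
  have hT0 : 0 ≤ T := rpow_nonneg ht _
  have hS0 : 0 ≤ S := rpow_nonneg hs _
  have hD0 : 0 ≤ D := rpow_nonneg hts _
  -- rewrite exponents
  have e1 : ∀ x : ℝ, 0 ≤ x → x ^ (2*H*K) = (x ^ (H*K)) ^ (2:ℕ) := by
    intro x hx
    rw [show 2*H*K = (H*K)*2 by ring, Real.rpow_mul hx, Real.rpow_two, sq]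
  have e2 : ∀ x : ℝ, 0 ≤ x → x ^ (2*H) = (x ^ (H*K)) ^ (2/K) := by
    intro x hx
    rw [← Real.rpow_mul hx]
    congr 1
    field_simp
  rw [e1 t ht, e1 s hs, e1 (t-s) hts, e2 t ht, e2 s hs]
  -- key facts
  have hST : S ≤ T := rpow_le_rpow hs hst hh0.le
  have hDTS : T - S ≤ D := by
    have h := aux_subadd hts hs hh0.le hh1
    rw [sub_add_cancel] at h
    rw [← hT, ← hS, ← hD] at h
    linarith
  have hDsq : (T - S) ^ (2:ℕ) ≤ D ^ (2:ℕ) := by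
    have h1 : 0 ≤ T - S := by linarith
    exact pow_le_pow_left₀ h1 hDTS 2
  -- power mean step
  have hq : (1:ℝ) ≤ 2/K := by
    rw [le_div_iff₀ hK0]; linarith
  have hpm : (2:ℝ) ^ (K-2) * (T + S) ^ (2:ℕ) ≤ (T ^ (2/K) + S ^ (2/K)) ^ K := by
    have h := aux_pm hT0 hS0 hq
    have h2 : ((T + S) ^ (2/K)) ^ K ≤ ((2:ℝ) ^ (2/K - 1) * (T ^ (2/K) + S ^ (2/K))) ^ K := by
      apply Real.rpow_le_rpow (rpow_nonneg (by linarith) _) h hK0.le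
    rw [← Real.rpow_natCast (T+S) 2]
    rw [← Real.rpow_mul (by linarith : (0:ℝ) ≤ T + S)] at h2
    have hqK : (2/K) * K = 2 := by field_simp
    rw [hqK] at h2
    rw [Real.mul_rpow (rpow_nonneg (by norm_num) _) (by positivity)] at h2
    rw [← Real.rpow_mul (by norm_num : (0:ℝ) ≤ 2)] at h2
    have hqK2 : (2/K - 1) * K = 2 - K := by field_simp
    rw [hqK2] at h2
    have h3 : (2:ℝ)^(K-2) * (2:ℝ)^(2-K) = 1 := by
      rw [← Real.rpow_add (by norm_num : (0:ℝ) < 2)]; norm_num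
    calc (2:ℝ) ^ (K-2) * (T + S) ^ ((2:ℕ):ℝ)
        ≤ (2:ℝ) ^ (K-2) * ((2:ℝ)^(2-K) * (T ^ (2/K) + S ^ (2/K)) ^ K) := by
          apply mul_le_mul_of_nonneg_left _ (rpow_nonneg (by norm_num) _)
          rw [show ((2:ℕ):ℝ) = (2:ℝ) by norm_num]
          exact h2
      _ = (T ^ (2/K) + S ^ (2/K)) ^ K := by rw [← mul_assoc, h3, one_mul]
  -- final algebra
  have hhalf : (1:ℝ)/2 ≤ (2:ℝ)^(1-K) := by
    have : (2:ℝ)^(-1:ℝ) ≤ (2:ℝ)^(1-K) :=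
      Real.rpow_le_rpow_of_exponent_le (by norm_num) (by linarith)
    rw [Real.rpow_neg_one] at this
    linarith
  have hmul : (2:ℝ)^(1-K) * (2:ℝ)^(K-2) = 1/2 := by
    rw [← Real.rpow_add (by norm_num : (0:ℝ) < 2),
      show (1-K) + (K-2) = (-1:ℝ) by ring, Real.rpow_neg_one]
    norm_num
  have hpos : (0:ℝ) < (2:ℝ)^(1-K) := Real.rpow_pos_of_pos (by norm_num) _
  have hstep : (2:ℝ)^(1-K) * ((2:ℝ)^(K-2) * (T+S)^(2:ℕ) + (T-S)^(2:ℕ))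
      ≤ (2:ℝ)^(1-K) * ((T ^ (2/K) + S ^ (2/K)) ^ K + D^(2:ℕ)) := by
    apply mul_le_mul_of_nonneg_left (add_le_add hpm hDsq) hpos.le
  refine le_trans ?_ hstep
  have key : (2:ℝ)^(1-K) * ((2:ℝ)^(K-2) * (T+S)^(2:ℕ) + (T-S)^(2:ℕ))
      = (1/2) * (T+S)^2 + (2:ℝ)^(1-K) * (T-S)^2 := by
    rw [mul_add, ← mul_assoc, hmul]
  rw [key]
  nlinarith [mul_nonneg (by linarith : (0:ℝ) ≤ (2:ℝ)^(1-K) - 1/2) (sq_nonneg (T-S))]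
end

section
/- Let H ∈ (1/2,1), K ∈ (1,2) with HK < 1. Define f(u) = 2^(1-K)·((1+u^(2H))^K + (1-u)^(2HK)) - u^(2HK) - 1 for u ∈ (0,1]. Then f(u) ≥ 0 for all u ∈ (0,1]. -/
open Real

private lemma claimC (K : ℝ) (hK1 : 1 < K) (hK2 : K < 2) {z : ℝ} (hz : 1 ≤ z) :
    (1 + z) ^ (K - 1) + 1 ≤ z ^ (K / 2) + 2 ^ (K - 1) := by
  set F : ℝ → ℝ := fun x => x ^ (K / 2) - (1 + x) ^ (K - 1) with hF
  have hmono : MonotoneOn F (Set.Ici 1) := by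
    apply monotoneOn_of_deriv_nonneg (convex_Ici 1)
    · apply ContinuousOn.sub
      · exact continuousOn_id.rpow_const (fun x _ => Or.inr (by positivity))
      · exact (continuousOn_const.add continuousOn_id).rpow_const
          (fun x _ => Or.inr (by linarith))
    · intro x hx
      rw [interior_Ici] at hx
      have hx0 : (0:ℝ) < x := lt_trans one_pos hx
      have d1 : HasDerivAt (fun y : ℝ => y ^ (K / 2)) (K / 2 * x ^ (K / 2 - 1)) x :=
        Real.hasDerivAt_rpow_const (Or.inl hx0.ne')
      have d2 : HasDerivAt (fun y : ℝ => (1 + y) ^ (K - 1))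
          (1 * (K - 1) * (1 + x) ^ (K - 1 - 1)) x :=
        HasDerivAt.rpow_const ((hasDerivAt_id x).const_add 1) (Or.inl (by linarith))
      exact ((d1.sub d2).differentiableAt).differentiableWithinAt
    · intro x hx
      rw [interior_Ici] at hx
      have hx0 : (0:ℝ) < x := lt_trans one_pos hx
      have d1 : HasDerivAt (fun y : ℝ => y ^ (K / 2)) (K / 2 * x ^ (K / 2 - 1)) x :=
        Real.hasDerivAt_rpow_const (Or.inl hx0.ne')
      have d2 : HasDerivAt (fun y : ℝ => (1 + y) ^ (K - 1))
          (1 * (K - 1) * (1 + x) ^ (K - 1 - 1)) x :=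
        HasDerivAt.rpow_const ((hasDerivAt_id x).const_add 1) (Or.inl (by linarith))
      have hd : deriv F x = K / 2 * x ^ (K / 2 - 1) - 1 * (K - 1) * (1 + x) ^ (K - 1 - 1) :=
        (d1.sub d2).deriv
      rw [hd]
      have h1 : (1 + x) ^ (K - 1 - 1) ≤ x ^ (K - 1 - 1) := by
        have e1 : (1 + x) ^ (K - 1 - 1) = ((1 + x) ^ (2 - K))⁻¹ := by
          rw [← Real.rpow_neg (by linarith)]; ring_nf
        have e2 : x ^ (K - 1 - 1) = (x ^ (2 - K))⁻¹ := by
          rw [← Real.rpow_neg (by linarith)]; ring_nf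
        rw [e1, e2]
        apply inv_anti₀ (Real.rpow_pos_of_pos hx0 _)
        exact Real.rpow_le_rpow (by linarith) (by linarith) (by linarith)
      have h2 : x ^ (K - 1 - 1) ≤ x ^ (K / 2 - 1) :=
        Real.rpow_le_rpow_of_exponent_le hx.le (by linarith)
      have h3 : (0:ℝ) ≤ (1 + x) ^ (K - 1 - 1) := Real.rpow_nonneg (by linarith) _
      have h4 : 1 * (K - 1) * (1 + x) ^ (K - 1 - 1) ≤ K / 2 * x ^ (K / 2 - 1) := by
        rw [one_mul]
        apply mul_le_mul (by linarith) (h1.trans h2) h3 (by linarith)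
      linarith
  have h1 : F 1 ≤ F z := hmono (by simp) hz hz
  have e1 : F 1 = 1 - 2 ^ (K - 1) := by
    simp only [hF]
    norm_num
  rw [e1] at h1
  simp only [hF] at h1
  linarith

private lemma claimC' (K : ℝ) (hK1 : 1 < K) (hK2 : K < 2) {y : ℝ} (hy0 : 0 < y)
    (hy1 : y ≤ 1) :
    y ^ (1 - K / 2) * (1 + y) ^ (K - 1) ≤ 1 + (2 ^ (K - 1) - 1) * y ^ (K / 2) := by
  have hz : 1 ≤ 1 / y := one_le_one_div hy0 hy1
  have hC := claimC K hK1 hK2 hz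
  have hyK : (0:ℝ) < y ^ (K / 2) := Real.rpow_pos_of_pos hy0 _
  have e0 : (1 + 1 / y) = (1 + y) / y := by field_simp; ring
  rw [e0, Real.div_rpow (by linarith) hy0.le, Real.div_rpow (by norm_num) hy0.le] at hC
  have hC2 := mul_le_mul_of_nonneg_right hC hyK.le
  have e1 : ((1 + y) ^ (K - 1) / y ^ (K - 1) + 1) * y ^ (K / 2)
      = (1 + y) ^ (K - 1) * (y ^ (K / 2) / y ^ (K - 1)) + y ^ (K / 2) := by ring
  have e2 : y ^ (K / 2) / y ^ (K - 1) = y ^ (1 - K / 2) := by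
    rw [← Real.rpow_sub hy0]; ring_nf
  have e3 : (1 ^ (K / 2) / y ^ (K / 2) + 2 ^ (K - 1)) * y ^ (K / 2)
      = 1 + 2 ^ (K - 1) * y ^ (K / 2) := by
    rw [Real.one_rpow]
    field_simp
  rw [e1, e2, e3] at hC2
  linarith

private lemma keyineq (K : ℝ) (hK1 : 1 < K) (hK2 : K < 2) {s : ℝ} (hs0 : 0 < s)
    (hs1 : s ≤ 1) :
    s ^ (2 / K - 1) * (1 + s ^ (2 / K)) ^ (K - 1) ≤ 1 + (2 ^ (K - 1) - 1) * s := by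
  have hKpos : (0:ℝ) < K := by linarith
  set y : ℝ := s ^ (2 / K) with hy
  have hy0 : 0 < y := Real.rpow_pos_of_pos hs0 _
  have hy1 : y ≤ 1 := Real.rpow_le_one hs0.le hs1 (by positivity)
  have e1 : y ^ (1 - K / 2) = s ^ (2 / K - 1) := by
    rw [hy, ← Real.rpow_mul hs0.le]
    congr 1
    field_simp
  have e2 : y ^ (K / 2) = s := by
    rw [hy, ← Real.rpow_mul hs0.le]
    rw [show 2 / K * (K / 2) = 1 by field_simp, Real.rpow_one]
  have := claimC' K hK1 hK2 hy0 hy1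
  rw [e1, e2] at this
  exact this

private lemma lemS (K : ℝ) (hK1 : 1 < K) (hK2 : K < 2) {t : ℝ} (ht0 : 0 < t) (ht1 : t ≤ 1) :
    2 ^ (K - 1) * (1 + t ^ (2:ℕ)) ≤ (1 + t ^ (2 / K)) ^ K + (1 - t) ^ (2:ℕ) := by
  have hKpos : (0:ℝ) < K := by linarith
  set h : ℝ → ℝ := fun s => (1 + s ^ (2 / K)) ^ K + (1 - s) ^ (2:ℕ)
      - 2 ^ (K - 1) * (1 + s ^ (2:ℕ)) with hh
  have hanti : AntitoneOn h (Set.Icc t 1) := by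
    apply antitoneOn_of_deriv_nonpos (convex_Icc t 1)
    · apply ContinuousOn.sub
      · apply ContinuousOn.add
        · exact (continuousOn_const.add
            (continuousOn_id.rpow_const (fun x _ => Or.inr (by positivity)))).rpow_const
            (fun x hx => Or.inr hKpos.le)
        · fun_prop
      · fun_prop
    · rw [interior_Icc]
      intro s hs
      have hs0 : (0:ℝ) < s := lt_trans ht0 hs.1
      have d2 : HasDerivAt (fun x : ℝ => 1 + x ^ (2 / K)) (2 / K * s ^ (2 / K - 1)) s :=
        (Real.hasDerivAt_rpow_const (Or.inl hs0.ne')).const_add 1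
      have hpos : (0:ℝ) < 1 + s ^ (2 / K) := by positivity
      have d3 : HasDerivAt (fun x : ℝ => (1 + x ^ (2 / K)) ^ K)
          (2 / K * s ^ (2 / K - 1) * K * (1 + s ^ (2 / K)) ^ (K - 1)) s :=
        d2.rpow_const (Or.inl hpos.ne')
      have d4 : HasDerivAt (fun x : ℝ => (1 - x) ^ (2:ℕ))
          ((2:ℕ) * (1 - s) ^ (2 - 1) * (-1)) s :=
        ((hasDerivAt_id s).const_sub 1).pow 2
      have d5 : HasDerivAt (fun x : ℝ => 2 ^ (K - 1) * (1 + x ^ (2:ℕ)))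
          (2 ^ (K - 1) * ((2:ℕ) * s ^ (2 - 1))) s :=
        ((hasDerivAt_pow 2 s).const_add 1).const_mul _
      exact ((d3.add d4).sub d5).differentiableAt.differentiableWithinAt
    · rw [interior_Icc]
      intro s hs
      have hs0 : (0:ℝ) < s := lt_trans ht0 hs.1
      have hsle : s ≤ 1 := hs.2.le
      have d2 : HasDerivAt (fun x : ℝ => 1 + x ^ (2 / K)) (2 / K * s ^ (2 / K - 1)) s :=
        (Real.hasDerivAt_rpow_const (Or.inl hs0.ne')).const_add 1
      have hpos : (0:ℝ) < 1 + s ^ (2 / K) := by positivity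
      have d3 : HasDerivAt (fun x : ℝ => (1 + x ^ (2 / K)) ^ K)
          (2 / K * s ^ (2 / K - 1) * K * (1 + s ^ (2 / K)) ^ (K - 1)) s :=
        d2.rpow_const (Or.inl hpos.ne')
      have d4 : HasDerivAt (fun x : ℝ => (1 - x) ^ (2:ℕ))
          ((2:ℕ) * (1 - s) ^ (2 - 1) * (-1)) s :=
        ((hasDerivAt_id s).const_sub 1).pow 2
      have d5 : HasDerivAt (fun x : ℝ => 2 ^ (K - 1) * (1 + x ^ (2:ℕ)))
          (2 ^ (K - 1) * ((2:ℕ) * s ^ (2 - 1))) s :=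
        ((hasDerivAt_pow 2 s).const_add 1).const_mul _
      have hd : deriv h s = 2 / K * s ^ (2 / K - 1) * K * (1 + s ^ (2 / K)) ^ (K - 1)
          + (2:ℕ) * (1 - s) ^ (2 - 1) * (-1) - 2 ^ (K - 1) * ((2:ℕ) * s ^ (2 - 1)) :=
        ((d3.add d4).sub d5).deriv
      rw [hd]
      have key := keyineq K hK1 hK2 hs0 hsle
      have e4 : 2 / K * s ^ (2 / K - 1) * K * (1 + s ^ (2 / K)) ^ (K - 1)
          = 2 * (s ^ (2 / K - 1) * (1 + s ^ (2 / K)) ^ (K - 1)) := by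
        field_simp
      rw [e4]
      simp only [pow_one, Nat.cast_ofNat]
      nlinarith [key]
  have h10 : h 1 = 0 := by
    simp only [hh]
    rw [Real.one_rpow]
    norm_num
    have : (2:ℝ) ^ (K - 1) * 2 ^ (1:ℝ) = 2 ^ K := by
      rw [← Real.rpow_add (by norm_num)]; norm_num
    rw [Real.rpow_one] at this
    linarith
  have := hanti (Set.mem_Icc.2 ⟨le_refl t, ht1⟩) (Set.mem_Icc.2 ⟨ht1, le_refl 1⟩) ht1
  rw [h10] at this
  simp only [hh] at this
  linarith

theorem stmt_6 (H K : ℝ) (hH : H ∈ Set.Ioo (1/2 : ℝ) 1) (hK : K ∈ Set.Ioo (1:ℝ) 2)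
    (hHK : H * K < 1)
    (u : ℝ) (hu : u ∈ Set.Ioc (0:ℝ) 1) :
    0 ≤ (2:ℝ) ^ (1 - K) * ((1 + u ^ (2*H)) ^ K + (1 - u) ^ (2*H*K))
        - u ^ (2*H*K) - 1 := by
  obtain ⟨hu0, hu1⟩ := hu
  obtain ⟨hH1, hH2⟩ := hH
  obtain ⟨hK1, hK2⟩ := hK
  have hKpos : (0:ℝ) < K := by linarith
  have hHKpos : (0:ℝ) < H * K := by nlinarith
  set t : ℝ := u ^ (H * K) with hts
  have ht0 : 0 < t := Real.rpow_pos_of_pos hu0 _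
  have ht1 : t ≤ 1 := Real.rpow_le_one hu0.le hu1 hHKpos.le
  -- u ^ (2*H) = t ^ (2/K)
  have e1 : u ^ (2 * H) = t ^ (2 / K) := by
    rw [hts, ← Real.rpow_mul hu0.le]
    congr 1
    field_simp
  -- u ^ (2*H*K) = t ^ 2
  have e2 : u ^ (2 * H * K) = t ^ (2:ℕ) := by
    rw [hts, ← Real.rpow_natCast (u ^ (H * K)) 2, ← Real.rpow_mul hu0.le]
    congr 1
    push_cast
    ring
  -- (1 - t)^2 ≤ (1 - u)^(2*H*K)
  have e3 : (1 - t) ^ (2:ℕ) ≤ (1 - u) ^ (2 * H * K) := by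
    have hut : u ≤ t := by
      have := Real.rpow_le_rpow_of_exponent_ge hu0 hu1 hHK.le
      rwa [Real.rpow_one] at this
    have hb : 1 - t ≤ (1 - u) ^ (H * K) := by
      rcases eq_or_lt_of_le hu1 with heq | hlt
      · have : t = 1 := by rw [hts, heq, Real.one_rpow]
        rw [this, ← heq]
        simp only [sub_self]
        exact Real.rpow_nonneg le_rfl _
      · have h1u0 : (0:ℝ) < 1 - u := by linarith
        have h1u1 : (1:ℝ) - u ≤ 1 := by linarith
        have := Real.rpow_le_rpow_of_exponent_ge h1u0 h1u1 hHK.le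
        rw [Real.rpow_one] at this
        linarith
    have hsq : (1 - t) ^ (2:ℕ) ≤ ((1 - u) ^ (H * K)) ^ (2:ℕ) :=
      pow_le_pow_left₀ (by linarith) hb 2
    have e4 : ((1 - u) ^ (H * K)) ^ (2:ℕ) = (1 - u) ^ (2 * H * K) := by
      rw [← Real.rpow_natCast ((1 - u) ^ (H * K)) 2, ← Real.rpow_mul (by linarith)]
      congr 1
      push_cast
      ring
    rw [e4] at hsq
    exact hsq
  have hS := lemS K hK1 hK2 ht0 ht1
  have h2pos : (0:ℝ) < 2 ^ (1 - K) := Real.rpow_pos_of_pos (by norm_num) _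
  have hcancel : (2:ℝ) ^ (1 - K) * 2 ^ (K - 1) = 1 := by
    rw [← Real.rpow_add (by norm_num)]
    norm_num
  rw [e1, e2]
  have step1 : 2 ^ (1 - K) * ((1 + t ^ (2 / K)) ^ K + (1 - t) ^ (2:ℕ))
      ≤ 2 ^ (1 - K) * ((1 + t ^ (2 / K)) ^ K + (1 - u) ^ (2 * H * K)) := by
    apply mul_le_mul_of_nonneg_left _ h2pos.le
    linarith
  have step2 : 2 ^ (1 - K) * (2 ^ (K - 1) * (1 + t ^ (2:ℕ)))
      ≤ 2 ^ (1 - K) * ((1 + t ^ (2 / K)) ^ K + (1 - t) ^ (2:ℕ)) :=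
    mul_le_mul_of_nonneg_left hS h2pos.le
  have e5 : 2 ^ (1 - K) * (2 ^ (K - 1) * (1 + t ^ (2:ℕ))) = 1 + t ^ (2:ℕ) := by
    rw [← mul_assoc, hcancel, one_mul]
  linarith
end

section
/- Let H ∈ (1/2,1), K ∈ (1,2) with HK < 1. Define h(u) = (1 + u^(-2H))^(K-1) - (1/u - 1)^(2HK-1) - 2^(K-1) for u ∈ (0,1]. Then h(u) ≤ 0 for all u ∈ (0,1]. -/
open Real

/-- Concave tangent line bound: `(c+b)^p ≤ c^p + p c^(p-1) b` for `0 ≤ p ≤ 1`. -/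
lemma aux_tangent_concave {c b p : ℝ} (hc : 0 < c) (hb : 0 ≤ b) (hp0 : 0 ≤ p) (hp1 : p ≤ 1) :
    (c + b) ^ p ≤ c ^ p + p * c ^ (p - 1) * b := by
  have hbc : (0:ℝ) ≤ b / c := div_nonneg hb hc.le
  have h1 : c + b = c * (1 + b / c) := by field_simp
  have h2 : (1 + b / c) ^ p ≤ 1 + p * (b / c) :=
    rpow_one_add_le_one_add_mul_self (by linarith) hp0 hp1
  have hcp : (0:ℝ) < c ^ p := Real.rpow_pos_of_pos hc p
  calc (c + b) ^ p = c ^ p * (1 + b / c) ^ p := by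
        rw [h1, Real.mul_rpow hc.le (by linarith)]
    _ ≤ c ^ p * (1 + p * (b / c)) := by
        exact mul_le_mul_of_nonneg_left h2 hcp.le
    _ = c ^ p + p * c ^ (p - 1) * b := by
        rw [Real.rpow_sub hc, Real.rpow_one]
        field_simp

/-- Convex tangent line bound: `x^a - 1 ≤ a (x-1) x^(a-1)` for `a ≥ 1`, `x ≥ 1`. -/
lemma aux_tangent_convex {x a : ℝ} (hx : 1 ≤ x) (ha : 1 ≤ a) :
    x ^ a - 1 ≤ a * (x - 1) * x ^ (a - 1) := by
  have hx0 : (0:ℝ) < x := lt_of_lt_of_le one_pos hx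
  have hber : 1 + a * (1 / x - 1) ≤ (1 + (1 / x - 1)) ^ a := by
    apply one_add_mul_self_le_rpow_one_add _ ha
    have : (0:ℝ) < 1 / x := by positivity
    linarith
  have h1 : (1 + (1 / x - 1)) = 1 / x := by ring
  rw [h1] at hber
  have h2 : (1 / x) ^ a = (x ^ a)⁻¹ := by
    rw [one_div, Real.inv_rpow hx0.le]
  rw [h2] at hber
  have hxa : (0:ℝ) < x ^ a := Real.rpow_pos_of_pos hx0 a
  have hmul := mul_le_mul_of_nonneg_left hber hxa.le
  rw [mul_inv_cancel₀ hxa.ne'] at hmul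
  have h3 : x ^ a * (1 + a * (1 / x - 1)) = x ^ a - a * (x - 1) * (x ^ a / x) := by
    field_simp
    ring
  rw [h3] at hmul
  have h4 : x ^ a / x = x ^ (a - 1) := by
    rw [Real.rpow_sub hx0, Real.rpow_one]
  rw [h4] at hmul
  linarith

/-- `1 + p * 2^(p-1) ≤ 2^p` for `0 ≤ p ≤ 1`. -/
lemma aux_two_pow {p : ℝ} (hp0 : 0 ≤ p) (hp1 : p ≤ 1) :
    1 + p * (2:ℝ) ^ (p - 1) ≤ (2:ℝ) ^ p := by
  have h1 : (2:ℝ) ^ (1 - p) ≤ 1 + (1 - p) * 1 := by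
    have := rpow_one_add_le_one_add_mul_self (s := 1) (p := 1 - p) (by norm_num)
      (by linarith) (by linarith)
    norm_num at this ⊢
    linarith
  have h2 : (2:ℝ) ^ p * (2:ℝ) ^ (1 - p) = 2 := by
    rw [← Real.rpow_add two_pos]
    norm_num
  have h3 : (2:ℝ) ^ (p - 1) * (2:ℝ) ^ (1:ℝ) = (2:ℝ) ^ p := by
    rw [← Real.rpow_add two_pos]
    norm_num
  rw [Real.rpow_one] at h3
  have hp2 : (0:ℝ) < (2:ℝ) ^ p := Real.rpow_pos_of_pos two_pos p
  nlinarith [Real.rpow_pos_of_pos two_pos (1 - p), Real.rpow_pos_of_pos two_pos (p - 1)]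

/-- Main inequality: for `1 < a < 2`, `0 < p < 1`, `a(1+p) < 2`, `s ≥ 0`:
`(1 + (1+s)^a)^p ≤ 2^p + s^(a(1+p)-1)`. -/
lemma aux_key {a p s : ℝ} (ha1 : 1 < a) (hp0 : 0 < p) (hp1 : p < 1)
    (hc : a * (1 + p) < 2) (hs : 0 ≤ s) :
    (1 + (1 + s) ^ a) ^ p ≤ 2 ^ p + s ^ (a * (1 + p) - 1) := by
  set q : ℝ := a * (1 + p) - 1 with hq
  have ha2 : a < 2 := by nlinarith
  have hap1 : a * p < 1 := by nlinarith
  have hap0 : 0 < a * p := by positivity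
  have hq0 : 0 < q := by nlinarith
  have hq1 : q < 1 := by simp only [hq]; linarith
  have hs1 : (0:ℝ) < 1 + s := by linarith
  have hpa2 : p + a ≤ 2 := by nlinarith [mul_pos (sub_pos.mpr ha1) (sub_pos.mpr ha2)]
  rcases le_or_gt s 1 with hsle | hsgt
  · -- case s ≤ 1
    have hx1 : (1:ℝ) ≤ (1 + s) ^ a := Real.one_le_rpow (by linarith) (by linarith)
    -- tangent at c = 2
    have h1 : (1 + (1 + s) ^ a) ^ p ≤ 2 ^ p + p * 2 ^ (p - 1) * ((1 + s) ^ a - 1) := by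
      have := aux_tangent_concave (c := 2) (b := (1 + s) ^ a - 1) (p := p)
        two_pos (by linarith) hp0.le hp1.le
      have he : (2:ℝ) + ((1 + s) ^ a - 1) = 1 + (1 + s) ^ a := by ring
      rwa [he] at this
    have h2 : (1 + s) ^ a - 1 ≤ a * s * (1 + s) ^ (a - 1) := by
      have := aux_tangent_convex (x := 1 + s) (a := a) (by linarith) ha1.le
      simpa using this
    have h3 : (1 + s) ^ (a - 1) ≤ 2 ^ (a - 1) :=
      Real.rpow_le_rpow hs1.le (by linarith) (by linarith)
    have h4 : (2:ℝ) ^ (p - 1) * 2 ^ (a - 1) = 2 ^ (p + a - 2) := by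
      rw [← Real.rpow_add two_pos]; ring_nf
    have h5 : (2:ℝ) ^ (p + a - 2) ≤ 1 :=
      Real.rpow_le_one_of_one_le_of_nonpos one_le_two (by linarith)
    have h6 : s ≤ s ^ q := by
      rcases eq_or_lt_of_le hs with h | h
      · rw [← h, Real.zero_rpow hq0.ne']
      · calc s = s ^ (1:ℝ) := (Real.rpow_one s).symm
          _ ≤ s ^ q := Real.rpow_le_rpow_of_exponent_ge h hsle hq1.le
    have hpm : (0:ℝ) < p * 2 ^ (p - 1) := by positivity
    have h7 : p * 2 ^ (p - 1) * ((1 + s) ^ a - 1) ≤ p * 2 ^ (p - 1) * (a * s * 2 ^ (a - 1)) := by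
      apply mul_le_mul_of_nonneg_left _ hpm.le
      calc (1 + s) ^ a - 1 ≤ a * s * (1 + s) ^ (a - 1) := h2
        _ ≤ a * s * 2 ^ (a - 1) := by
            apply mul_le_mul_of_nonneg_left h3 (by positivity)
    have h8 : p * 2 ^ (p - 1) * (a * s * 2 ^ (a - 1)) = (p * a) * 2 ^ (p + a - 2) * s := by
      rw [← h4]; ring
    have h9 : (p * a) * 2 ^ (p + a - 2) * s ≤ s := by
      have hpa1 : p * a ≤ 1 := by nlinarith
      have hpos : (0:ℝ) < 2 ^ (p + a - 2) := Real.rpow_pos_of_pos two_pos _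
      have hone : (p * a) * 2 ^ (p + a - 2) ≤ 1 := by nlinarith
      nlinarith [mul_le_mul_of_nonneg_right hone hs]
    calc (1 + (1 + s) ^ a) ^ p ≤ 2 ^ p + p * 2 ^ (p - 1) * ((1 + s) ^ a - 1) := h1
      _ ≤ 2 ^ p + (p * a) * 2 ^ (p + a - 2) * s := by rw [← h8]; linarith
      _ ≤ 2 ^ p + s := by linarith
      _ ≤ 2 ^ p + s ^ q := by linarith
  · -- case s > 1
    have hs1' : (2:ℝ) ≤ 1 + s := by linarith
    have hx0 : (0:ℝ) < (1 + s) ^ a := Real.rpow_pos_of_pos hs1 a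
    -- tangent at c = (1+s)^a
    have g1 : (1 + (1 + s) ^ a) ^ p ≤ (1 + s) ^ (a * p) + p * (1 + s) ^ (a * (p - 1)) := by
      have := aux_tangent_concave (c := (1 + s) ^ a) (b := 1) (p := p)
        hx0 zero_le_one hp0.le hp1.le
      have he : (1 + s) ^ a + 1 = 1 + (1 + s) ^ a := by ring
      rw [he] at this
      calc (1 + (1 + s) ^ a) ^ p ≤ ((1 + s) ^ a) ^ p + p * ((1 + s) ^ a) ^ (p - 1) * 1 := this
        _ = (1 + s) ^ (a * p) + p * (1 + s) ^ (a * (p - 1)) := by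
            rw [← Real.rpow_mul hs1.le, ← Real.rpow_mul hs1.le]; ring
    have g2 : (1 + s) ^ (a * p) ≤ s ^ (a * p) + a * p * s ^ (a * p - 1) := by
      have := aux_tangent_concave (c := s) (b := 1) (p := a * p)
        (by linarith) zero_le_one hap0.le hap1.le
      have he : s + 1 = 1 + s := by ring
      rw [he] at this
      linarith [this]
    have g3 : s ^ (a * p - 1) ≤ 1 :=
      Real.rpow_le_one_of_one_le_of_nonpos hsgt.le (by linarith)
    have g4 : s ^ (a * p) ≤ s ^ q :=
      Real.rpow_le_rpow_of_exponent_le hsgt.le (by simp only [hq]; linarith)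
    have g5 : (1 + s) ^ (a * (p - 1)) ≤ 2 ^ (p - 1) := by
      calc (1 + s) ^ (a * (p - 1)) ≤ (2:ℝ) ^ (a * (p - 1)) :=
            Real.rpow_le_rpow_of_nonpos two_pos hs1' (by nlinarith)
        _ ≤ (2:ℝ) ^ (p - 1) := by
            apply Real.rpow_le_rpow_of_exponent_le one_le_two
            nlinarith
    have g6 : a * p + p * 2 ^ (p - 1) ≤ 2 ^ p := by
      have := aux_two_pow hp0.le hp1.le
      linarith
    have hp2 : (0:ℝ) < p := hp0
    calc (1 + (1 + s) ^ a) ^ p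
        ≤ (1 + s) ^ (a * p) + p * (1 + s) ^ (a * (p - 1)) := g1
      _ ≤ (s ^ (a * p) + a * p * s ^ (a * p - 1)) + p * 2 ^ (p - 1) := by
          have := mul_le_mul_of_nonneg_left g5 hp2.le
          linarith
      _ ≤ s ^ q + a * p + p * 2 ^ (p - 1) := by
          have := mul_le_mul_of_nonneg_left g3 hap0.le
          linarith
      _ ≤ s ^ q + 2 ^ p := by linarith
      _ = 2 ^ p + s ^ q := by ring

theorem stmt_7 (H K : ℝ) (hH : H ∈ Set.Ioo (1/2 : ℝ) 1) (hK : K ∈ Set.Ioo (1:ℝ) 2)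
    (hHK : H * K < 1)
    (u : ℝ) (hu : u ∈ Set.Ioc (0:ℝ) 1) :
    (1 + u ^ (-(2*H))) ^ (K - 1) - (1/u - 1) ^ (2*H*K - 1) - (2:ℝ) ^ (K - 1) ≤ 0 := by
  obtain ⟨hu0, hu1⟩ := hu
  obtain ⟨hH1, hH2⟩ := hH
  obtain ⟨hK1, hK2⟩ := hK
  set a : ℝ := 2 * H with ha
  set p : ℝ := K - 1 with hp
  set s : ℝ := 1 / u - 1 with hs
  have hs0 : 0 ≤ s := by
    have : 1 ≤ 1 / u := by rw [le_div_iff₀ hu0]; linarith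
    simp only [hs]; linarith
  have h1s : 1 + s = 1 / u := by simp only [hs]; ring
  have hrw : u ^ (-(2 * H)) = (1 + s) ^ a := by
    rw [h1s, ← ha, one_div, ← Real.rpow_neg_one u, ← Real.rpow_mul hu0.le]
    ring_nf
  have hrw2 : 2 * H * K - 1 = a * (1 + p) - 1 := by simp only [ha, hp]; ring
  have key := aux_key (a := a) (p := p) (s := s)
    (by simp only [ha]; linarith) (by simp only [hp]; linarith) (by simp only [hp]; linarith)
    (by simp only [ha, hp]; nlinarith) hs0
  rw [hrw, hrw2]
  linarith [key]
end

section
/- For K ∈ (1,2) and t > 0, the integral ∫₀^∞ (1-e^(-rt))² r^(-(1+K)) dr converges and equals (Γ(2-K)/(K(K-1)))·(2^K - 2)·t^K. -/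
/-!
Since `(1 - e^{-x})² = (e^{-2x} - 1 + 2x) - 2 (e^{-x} - 1 + x)`, it suffices to show
`∫₀^∞ (e^{-ar} - 1 + ar) r^{-(1+K)} dr = Γ(2-K) a^K / (K(K-1))` for `a > 0`. Two integrations
by parts, lowering the power of `r` in the weight each time, turn the left side into
`a² ∫₀^∞ e^{-ar} r^{1-K} dr / (K(K-1))`, a Gamma integral. The boundary terms vanish because
`e^{-ar} - 1 + ar` is `O(r²)` at `0` and `O(r)` at `∞`, and `1 < K < 2`.
-/

open Real MeasureTheory Set Filter Topology

section PowerWeight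

variable {f u u' : ℝ → ℝ} {p q r s m C D : ℝ}

theorem integrableOn_Ioi_of_norm_le_rpow (hp : -1 < p) (hq : q < -1)
    (hf : ContinuousOn f (Ioi 0)) (h₀ : ∀ r ∈ Ioi (0 : ℝ), ‖f r‖ ≤ C * r ^ p)
    (h₁ : ∀ r ∈ Ioi (0 : ℝ), ‖f r‖ ≤ D * r ^ q) : IntegrableOn f (Ioi 0) := by
  rw [← Ioc_union_Ioi_eq_Ioi zero_le_one, integrableOn_union]
  constructor
  · have hmaj : IntegrableOn (fun r : ℝ => C * r ^ p) (Ioc 0 1) :=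
      ((intervalIntegrable_iff_integrableOn_Ioc_of_le zero_le_one).mp
        (intervalIntegral.intervalIntegrable_rpow' hp)).const_mul C
    refine hmaj.mono' ((hf.mono Ioc_subset_Ioi_self).aestronglyMeasurable measurableSet_Ioc) ?_
    filter_upwards [ae_restrict_mem measurableSet_Ioc] with r hr using h₀ r hr.1
  · have hmaj : IntegrableOn (fun r : ℝ => D * r ^ q) (Ioi 1) :=
      (integrableOn_Ioi_rpow_of_lt hq one_pos).const_mul D
    refine hmaj.mono' ((hf.mono (Ioi_subset_Ioi zero_le_one)).aestronglyMeasurable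
      measurableSet_Ioi) ?_
    filter_upwards [ae_restrict_mem measurableSet_Ioi] with r (hr : 1 < r)
    exact h₁ r (zero_lt_one.trans hr)

theorem tendsto_nhdsGT_zero_of_norm_le_rpow (hp : 0 < p)
    (h : ∀ r ∈ Ioi (0 : ℝ), ‖f r‖ ≤ C * r ^ p) : Tendsto f (𝓝[>] 0) (𝓝 0) := by
  have hpow : Tendsto (fun r : ℝ => C * r ^ p) (𝓝[>] 0) (𝓝 0) := by
    have := ((continuousAt_rpow_const 0 p (Or.inr hp.le)).const_mul C).tendsto
    rw [zero_rpow hp.ne', mul_zero] at this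
    exact this.mono_left nhdsWithin_le_nhds
  exact squeeze_zero_norm' (eventually_nhdsWithin_of_forall h) hpow

theorem tendsto_atTop_zero_of_norm_le_rpow (hq : q < 0)
    (h : ∀ r ∈ Ioi (0 : ℝ), ‖f r‖ ≤ C * r ^ q) : Tendsto f atTop (𝓝 0) := by
  have hpow : Tendsto (fun r : ℝ => C * r ^ q) atTop (𝓝 0) := by
    simpa using (tendsto_rpow_neg_atTop (neg_pos.mpr hq)).const_mul C
  exact squeeze_zero_norm' ((eventually_gt_atTop 0).mono h) hpow

theorem norm_mul_rpow_le_of_abs_le {x y e : ℝ} (hr : 0 < r) (h : |y| ≤ C * r ^ e) :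
    ‖y * r ^ x‖ ≤ C * r ^ (e + x) := by
  rw [norm_mul, norm_eq_abs, norm_of_nonneg (rpow_nonneg hr.le _), rpow_add hr, ← mul_assoc]
  exact mul_le_mul_of_nonneg_right h (rpow_nonneg hr.le _)

theorem integrableOn_Ioi_mul_rpow_sub_one (hms₀ : 0 < m + s) (hms₁ : m + s < 1)
    (hu : ContinuousOn u (Ioi 0)) (hC : ∀ r ∈ Ioi (0 : ℝ), |u r| ≤ C * r ^ m)
    (hD : ∀ r ∈ Ioi (0 : ℝ), |u r| ≤ D * r ^ (m - 1)) :
    IntegrableOn (fun r => u r * r ^ (s - 1)) (Ioi 0) := by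
  refine integrableOn_Ioi_of_norm_le_rpow (p := m + (s - 1)) (q := m - 1 + (s - 1))
    (by linarith) (by linarith) ?_ (fun r hr => norm_mul_rpow_le_of_abs_le hr (hC r hr))
    (fun r hr => norm_mul_rpow_le_of_abs_le hr (hD r hr))
  exact hu.mul fun r (hr : 0 < r) =>
    (continuousAt_rpow_const r _ (Or.inl hr.ne')).continuousWithinAt

theorem integral_Ioi_mul_rpow_sub_one_eq (hs : s ≠ 0) (hms₀ : 0 < m + s) (hms₁ : m + s < 1)
    (hu : ∀ r ∈ Ioi (0 : ℝ), HasDerivAt u (u' r) r)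
    (hC : ∀ r ∈ Ioi (0 : ℝ), |u r| ≤ C * r ^ m)
    (hD : ∀ r ∈ Ioi (0 : ℝ), |u r| ≤ D * r ^ (m - 1))
    (hu' : IntegrableOn (fun r => u' r * r ^ s) (Ioi 0)) :
    ∫ r in Ioi 0, u r * r ^ (s - 1) = -(∫ r in Ioi 0, u' r * r ^ s) / s := by
  have hv : ∀ r ∈ Ioi (0 : ℝ), HasDerivAt (fun r => r ^ s) (s * r ^ (s - 1)) r := fun r hr =>
    hasDerivAt_rpow_const (Or.inl (ne_of_gt hr))
  have hint := integrableOn_Ioi_mul_rpow_sub_one hms₀ hms₁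
    (fun r hr => (hu r hr).continuousAt.continuousWithinAt) hC hD
  have hparts := integral_Ioi_mul_deriv_eq_deriv_mul hu hv
    (by simpa only [IntegrableOn, Pi.mul_def, mul_left_comm _ s] using hint.const_mul s) hu'
    (tendsto_nhdsGT_zero_of_norm_le_rpow hms₀ fun r hr =>
      norm_mul_rpow_le_of_abs_le hr (hC r hr))
    (tendsto_atTop_zero_of_norm_le_rpow (by linarith : m - 1 + s < 0) fun r hr =>
      norm_mul_rpow_le_of_abs_le hr (hD r hr))
  simp only [mul_left_comm _ s, integral_const_mul, sub_zero, zero_sub] at hparts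
  rw [eq_div_iff hs, mul_comm, hparts]

end PowerWeight

theorem exp_neg_sub_one_add_le_sq {x : ℝ} (hx : 0 ≤ x) : exp (-x) - 1 + x ≤ x ^ 2 := by
  have hexp : (1 + x) * exp (-x) ≤ 1 := by
    calc (1 + x) * exp (-x) ≤ exp x * exp (-x) := by
          gcongr
          linarith [add_one_le_exp x]
      _ = 1 := by rw [← exp_add, add_neg_cancel, exp_zero]
  calc exp (-x) - 1 + x ≤ x * (1 - exp (-x)) := by linarith
    _ ≤ x * x := by gcongr; linarith [one_sub_le_exp_neg x]
    _ = x ^ 2 := (sq x).symm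

theorem hasDerivAt_exp_neg_mul (a r : ℝ) :
    HasDerivAt (fun r => exp (-(a * r))) (-a * exp (-(a * r))) r := by
  simpa [mul_comm] using ((hasDerivAt_id r).const_mul a).neg.exp

theorem abs_exp_neg_mul_sub_one_add_mul_le {a r : ℝ} (ha : 0 ≤ a) (hr : 0 ≤ r) :
    |exp (-(a * r)) - 1 + a * r| ≤ a ^ 2 * r ^ 2 ∧ |exp (-(a * r)) - 1 + a * r| ≤ a * r := by
  have hx : 0 ≤ a * r := mul_nonneg ha hr
  have hup : exp (-(a * r)) ≤ 1 := exp_le_one_iff.mpr (by linarith)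
  rw [abs_of_nonneg (by linarith [add_one_le_exp (-(a * r))])]
  exact ⟨by nlinarith [exp_neg_sub_one_add_le_sq hx], by linarith⟩

theorem abs_mul_one_sub_exp_neg_mul_le {a r : ℝ} (ha : 0 ≤ a) (hr : 0 ≤ r) :
    |a * (1 - exp (-(a * r)))| ≤ a ^ 2 * r ∧ |a * (1 - exp (-(a * r)))| ≤ a := by
  have hlow := one_sub_le_exp_neg (a * r)
  have hup : exp (-(a * r)) ≤ 1 := exp_le_one_iff.mpr (by nlinarith)
  rw [abs_of_nonneg (mul_nonneg ha (by linarith))]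
  exact ⟨by nlinarith, by nlinarith [exp_pos (-(a * r))]⟩

theorem integrableOn_and_integral_sq_mul_exp_neg_mul_mul_rpow {a K : ℝ} (ha : 0 < a)
    (hK : K < 2) :
    IntegrableOn (fun r => a ^ 2 * exp (-(a * r)) * r ^ (1 - K)) (Ioi 0) ∧
    ∫ r in Ioi 0, a ^ 2 * exp (-(a * r)) * r ^ (1 - K) = Gamma (2 - K) * a ^ K := by
  have hcomm : ∀ r : ℝ, a ^ 2 * exp (-(a * r)) * r ^ (1 - K) =
      a ^ 2 * (r ^ (2 - K - 1) * exp (-(a * r))) := fun r => by ring_nf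
  have hpow : a ^ 2 * (1 / a) ^ (2 - K) = a ^ K := by
    rw [one_div, inv_rpow ha.le, ← rpow_neg ha.le, ← rpow_natCast, ← rpow_add ha]
    norm_num
  simp only [hcomm]
  constructor
  · have hΓ : IntegrableOn (fun r : ℝ => r ^ (2 - K - 1) * exp (-(a * r))) (Ioi 0) := by
      simpa only [rpow_one, neg_mul] using
        integrableOn_rpow_mul_exp_neg_mul_rpow (s := 2 - K - 1) (by linarith) one_pos ha
    exact hΓ.const_mul _
  · rw [integral_const_mul, integral_rpow_mul_exp_neg_mul_Ioi (by linarith) ha, ← hpow]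
    ring

theorem integrableOn_and_integral_exp_neg_mul_sub_one_add_mul_rpow {a K : ℝ} (ha : 0 < a)
    (hK₁ : 1 < K) (hK₂ : K < 2) :
    IntegrableOn (fun r => (exp (-(a * r)) - 1 + a * r) * r ^ (-(1 + K))) (Ioi 0) ∧
    ∫ r in Ioi 0, (exp (-(a * r)) - 1 + a * r) * r ^ (-(1 + K))
      = Gamma (2 - K) / (K * (K - 1)) * a ^ K := by
  set h := fun r => exp (-(a * r)) - 1 + a * r
  set h' := fun r => a * (1 - exp (-(a * r)))
  set h'' := fun r => a ^ 2 * exp (-(a * r))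
  have hh : ∀ r ∈ Ioi (0 : ℝ), HasDerivAt h (h' r) r := fun r _ =>
    (((hasDerivAt_exp_neg_mul a r).sub_const 1).add ((hasDerivAt_id' r).const_mul a)).congr_deriv
      (by ring)
  have hh' : ∀ r ∈ Ioi (0 : ℝ), HasDerivAt h' (h'' r) r := fun r _ =>
    (((hasDerivAt_exp_neg_mul a r).const_sub 1).const_mul a).congr_deriv (by ring)
  have hC : ∀ r ∈ Ioi (0 : ℝ), |h r| ≤ a ^ 2 * r ^ (2 : ℝ) := fun r hr => by
    simpa only [rpow_two] using (abs_exp_neg_mul_sub_one_add_mul_le ha.le (le_of_lt hr)).1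
  have hD : ∀ r ∈ Ioi (0 : ℝ), |h r| ≤ a * r ^ ((2 : ℝ) - 1) := fun r hr => by
    norm_num only [rpow_one]
    exact (abs_exp_neg_mul_sub_one_add_mul_le ha.le (le_of_lt hr)).2
  have hC' : ∀ r ∈ Ioi (0 : ℝ), |h' r| ≤ a ^ 2 * r ^ (1 : ℝ) := fun r hr => by
    simpa only [rpow_one] using (abs_mul_one_sub_exp_neg_mul_le ha.le (le_of_lt hr)).1
  have hD' : ∀ r ∈ Ioi (0 : ℝ), |h' r| ≤ a * r ^ ((1 : ℝ) - 1) := fun r hr => by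
    simpa only [sub_self, rpow_zero, mul_one] using
      (abs_mul_one_sub_exp_neg_mul_le ha.le (le_of_lt hr)).2
  obtain ⟨hgamma, hvalue⟩ := integrableOn_and_integral_sq_mul_exp_neg_mul_mul_rpow ha hK₂
  have hh'_integrable := integrableOn_Ioi_mul_rpow_sub_one (s := 1 - K) (m := 1)
    (by linarith) (by linarith) (fun r hr => (hh' r hr).continuousAt.continuousWithinAt) hC' hD'
  rw [sub_sub_cancel_left] at hh'_integrable
  have hparts₁ := integral_Ioi_mul_rpow_sub_one_eq (s := -K) (m := 2) (by linarith)
    (by linarith) (by linarith) hh hC hD hh'_integrable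
  have hparts₂ := integral_Ioi_mul_rpow_sub_one_eq (s := 1 - K) (m := 1) (by linarith)
    (by linarith) (by linarith) hh' hC' hD' hgamma
  rw [sub_sub_cancel_left, hvalue] at hparts₂
  rw [show -(1 + K) = -K - 1 by ring]
  refine ⟨integrableOn_Ioi_mul_rpow_sub_one (by linarith) (by linarith)
    (fun r hr => (hh r hr).continuousAt.continuousWithinAt) hC hD, ?_⟩
  rw [hparts₁, hparts₂]
  have : K - 1 ≠ 0 := by linarith
  have : 1 - K ≠ 0 := by linarith
  field_simp
  ring

theorem stmt_12 (K : ℝ) (hK : K ∈ Set.Ioo (1:ℝ) 2) (t : ℝ) (ht : 0 < t) :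
    IntegrableOn (fun r : ℝ => (1 - Real.exp (-(r * t))) ^ 2 * r ^ (-(1 + K)))
      (Set.Ioi 0) volume ∧
    ∫ r in Set.Ioi (0:ℝ), (1 - Real.exp (-(r * t))) ^ 2 * r ^ (-(1 + K))
      = (Real.Gamma (2 - K) / (K * (K - 1))) * ((2:ℝ) ^ K - 2) * t ^ K := by
  obtain ⟨hK₁, hK₂⟩ := hK
  have hsplit : (fun r : ℝ => (1 - exp (-(r * t))) ^ 2 * r ^ (-(1 + K))) =
      fun r => (exp (-(2 * t * r)) - 1 + 2 * t * r) * r ^ (-(1 + K)) -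
        2 * ((exp (-(t * r)) - 1 + t * r) * r ^ (-(1 + K))) := by
    ext r
    rw [show -(2 * t * r) = -(r * t) + -(r * t) by ring, exp_add, mul_comm t r]
    ring
  obtain ⟨hint₂, hval₂⟩ :=
    integrableOn_and_integral_exp_neg_mul_sub_one_add_mul_rpow (mul_pos two_pos ht) hK₁ hK₂
  obtain ⟨hint₁, hval₁⟩ := integrableOn_and_integral_exp_neg_mul_sub_one_add_mul_rpow ht hK₁ hK₂
  rw [hsplit]
  refine ⟨hint₂.sub (hint₁.const_mul 2), ?_⟩
  rw [integral_sub hint₂ (hint₁.const_mul 2), integral_const_mul, hval₂, hval₁,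
    mul_rpow zero_le_two ht.le]
  ring
end

section
/- For K ∈ (1,2) and s,t > 0: ∫₀^∞ (1-e^(-rt))(1-e^(-rs)) r^(-(1+K)) dr = (Γ(2-K)/(K(K-1)))·((t+s)^K - t^K - s^K). -/
/-!
Writing `1 - exp (-(r * t)) = r * ∫ u in 0..t, exp (-(r * u))` for both factors and exchanging
the order of integration turns the integral into
`∫ u in 0..t, ∫ v in 0..s, ∫ r > 0, r ^ (1 - K) * exp (-(r * (u + v)))`.
The innermost integral is `Γ(2 - K) * (u + v) ^ (K - 2)`, and integrating this power over the
rectangle `[0, t] × [0, s]` gives `((t + s) ^ K - t ^ K - s ^ K) / (K * (K - 1))`.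
-/

open Real MeasureTheory Set

lemma one_sub_exp_neg_nonneg {x : ℝ} (hx : 0 ≤ x) : 0 ≤ 1 - exp (-x) := by
  simpa using exp_le_one_iff.2 (neg_nonpos.2 hx)

lemma one_sub_exp_neg_le_self (x : ℝ) : 1 - exp (-x) ≤ x := by
  linarith [one_sub_le_exp_neg x]

lemma one_sub_exp_neg_le_one (x : ℝ) : 1 - exp (-x) ≤ 1 := by
  linarith [exp_pos (-x)]

lemma integral_Ioc_exp_neg_mul {r : ℝ} (hr : r ≠ 0) {t : ℝ} (ht : 0 ≤ t) :
    ∫ u in Ioc 0 t, exp (-(r * u)) = (1 - exp (-(r * t))) / r := by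
  rw [← intervalIntegral.integral_of_le ht]
  simp_rw [← neg_mul]
  rw [intervalIntegral.integral_comp_mul_left exp (neg_ne_zero.2 hr), integral_exp]
  simp only [mul_zero, exp_zero, smul_eq_mul]
  field_simp
  ring

theorem integral_one_sub_exp_neg_mul_eq {g : ℝ → ℝ} {t : ℝ} (ht : 0 < t)
    (hg : IntegrableOn (fun r ↦ (1 - exp (-(r * t))) * g r) (Ioi 0)) :
    ∫ r in Ioi 0, (1 - exp (-(r * t))) * g r
      = ∫ u in Ioc 0 t, ∫ r in Ioi 0, r * g r * exp (-(r * u)) := by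
  have hpos : ∀ r ∈ Ioi (0 : ℝ), 0 < 1 - exp (-(r * t)) := fun r (hr : 0 < r) ↦ by
    simpa using exp_lt_one_iff.2 (neg_lt_zero.2 (mul_pos hr ht))
  have hslice : ∀ r ∈ Ioi (0 : ℝ), (1 - exp (-(r * t))) * g r
      = ∫ u in Ioc 0 t, r * g r * exp (-(r * u)) := fun r (hr : 0 < r) ↦ by
    rw [integral_const_mul, integral_Ioc_exp_neg_mul hr.ne' ht.le]
    field_simp
  have hgm : AEStronglyMeasurable g (volume.restrict (Ioi 0)) := by
    have hinv : ContinuousOn (fun r ↦ (1 - exp (-(r * t)))⁻¹) (Ioi 0) :=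
      ContinuousOn.inv₀ (by fun_prop) fun r hr ↦ (hpos r hr).ne'
    refine (hg.aestronglyMeasurable.mul (hinv.aestronglyMeasurable measurableSet_Ioi)).congr ?_
    refine (ae_restrict_iff' measurableSet_Ioi).2 (.of_forall fun r hr ↦ ?_)
    simp only [Pi.mul_apply]
    field_simp [(hpos r hr).ne']
  have hF : Integrable (Function.uncurry fun r u ↦ r * g r * exp (-(r * u)))
      ((volume.restrict (Ioi 0)).prod (volume.restrict (Ioc 0 t))) := by
    have hm : AEStronglyMeasurable (Function.uncurry fun r u ↦ r * g r * exp (-(r * u)))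
        ((volume.restrict (Ioi 0)).prod (volume.restrict (Ioc 0 t))) :=
      (continuous_fst.aestronglyMeasurable.mul hgm.comp_fst).mul
        (by fun_prop : Continuous fun p : ℝ × ℝ ↦ exp (-(p.1 * p.2))).aestronglyMeasurable
    refine (integrable_prod_iff hm).2 ⟨.of_forall fun r ↦ ?_, hg.norm.congr ?_⟩
    · exact (by fun_prop : Continuous fun u ↦ r * g r * exp (-(r * u))).integrableOn_Ioc
    refine (ae_restrict_iff' measurableSet_Ioi).2 (.of_forall fun r (hr : 0 < r) ↦ ?_)
    simp only [Function.uncurry_apply_pair, norm_mul, norm_of_nonneg (exp_pos _).le]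
    rw [integral_const_mul, integral_Ioc_exp_neg_mul hr.ne' ht.le, norm_of_nonneg hr.le,
      norm_of_nonneg (hpos r hr).le]
    field_simp
  rw [setIntegral_congr_fun measurableSet_Ioi hslice, integral_integral_swap hF]

lemma integrableOn_one_sub_exp_mul_one_sub_exp_mul_rpow {K a b : ℝ} (hK0 : 0 < K) (hK2 : K < 2)
    (ha : 0 ≤ a) (hb : 0 ≤ b) :
    IntegrableOn (fun r ↦ (1 - exp (-(r * a))) * ((1 - exp (-(r * b))) * r ^ (-(1 + K))))
      (Ioi 0) := by
  have hm : ∀ S ⊆ Ioi (0 : ℝ), MeasurableSet S → AEStronglyMeasurable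
      (fun r ↦ (1 - exp (-(r * a))) * ((1 - exp (-(r * b))) * r ^ (-(1 + K))))
      (volume.restrict S) := fun S hS hSm ↦
    ContinuousOn.aestronglyMeasurable (ContinuousOn.mul (by fun_prop) (ContinuousOn.mul
      (by fun_prop) (continuousOn_id.rpow_const fun x hx ↦ .inl (hS hx).ne'))) hSm
  have hnear : IntegrableOn (fun r : ℝ ↦ a * b * r ^ (1 - K)) (Ioc 0 1) :=
    (intervalIntegral.intervalIntegrable_rpow' (by linarith)).1.const_mul _
  have hfar : IntegrableOn (fun r : ℝ ↦ r ^ (-(1 + K))) (Ioi 1) :=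
    integrableOn_Ioi_rpow_of_lt (by linarith) one_pos
  rw [← Ioc_union_Ioi_eq_Ioi zero_le_one]
  refine .union (hnear.mono' (hm _ Ioc_subset_Ioi_self measurableSet_Ioc) ?_)
    (hfar.mono' (hm _ (Ioi_subset_Ioi zero_le_one) measurableSet_Ioi) ?_)
  · refine (ae_restrict_iff' measurableSet_Ioc).2 (.of_forall fun x hx ↦ ?_)
    have hx0 : 0 < x := hx.1
    have h1 := one_sub_exp_neg_nonneg (mul_nonneg hx0.le ha)
    have h2 := one_sub_exp_neg_nonneg (mul_nonneg hx0.le hb)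
    rw [norm_of_nonneg (by positivity)]
    calc (1 - exp (-(x * a))) * ((1 - exp (-(x * b))) * x ^ (-(1 + K)))
        ≤ (x * a) * ((x * b) * x ^ (-(1 + K))) := by
          gcongr <;> exact one_sub_exp_neg_le_self _
      _ = a * b * x ^ (1 - K) := by
          rw [show 1 - K = -(1 + K) + 1 + 1 by ring, rpow_add_one hx0.ne', rpow_add_one hx0.ne']
          ring
  · refine (ae_restrict_iff' measurableSet_Ioi).2 (.of_forall fun x (hx : 1 < x) ↦ ?_)
    have hx0 : 0 < x := one_pos.trans hx
    have h1 := one_sub_exp_neg_nonneg (mul_nonneg hx0.le ha)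
    have h2 := one_sub_exp_neg_nonneg (mul_nonneg hx0.le hb)
    rw [norm_of_nonneg (by positivity)]
    calc (1 - exp (-(x * a))) * ((1 - exp (-(x * b))) * x ^ (-(1 + K)))
        ≤ 1 * (1 * x ^ (-(1 + K))) := by
          gcongr <;> exact one_sub_exp_neg_le_one _
      _ = x ^ (-(1 + K)) := by ring

lemma integrableOn_one_sub_exp_mul_rpow_mul_exp {K s u : ℝ} (hK : K < 2) (hs : 0 ≤ s)
    (hu : 0 < u) :
    IntegrableOn (fun r ↦ (1 - exp (-(r * s))) * (r ^ (-K) * exp (-(r * u)))) (Ioi 0) := by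
  have hdom : IntegrableOn (fun r ↦ s * (r ^ (1 - K) * exp (-u * r ^ (1 : ℝ)))) (Ioi 0) :=
    (integrableOn_rpow_mul_exp_neg_mul_rpow (by linarith) one_pos hu).const_mul s
  refine hdom.mono' (ContinuousOn.aestronglyMeasurable ?_ measurableSet_Ioi) ?_
  · exact ContinuousOn.mul (by fun_prop)
      (ContinuousOn.mul (continuousOn_id.rpow_const fun x hx ↦ .inl (ne_of_gt hx)) (by fun_prop))
  refine (ae_restrict_iff' measurableSet_Ioi).2 (.of_forall fun x (hx : 0 < x) ↦ ?_)
  have h1 := one_sub_exp_neg_nonneg (mul_nonneg hx.le hs)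
  rw [norm_of_nonneg (by positivity), rpow_one, neg_mul]
  calc (1 - exp (-(x * s))) * (x ^ (-K) * exp (-(x * u)))
      ≤ (x * s) * (x ^ (-K) * exp (-(x * u))) := by
        gcongr
        exact one_sub_exp_neg_le_self _
    _ = s * (x ^ (1 - K) * exp (-(u * x))) := by
        rw [show 1 - K = -K + 1 by ring, rpow_add_one hx.ne', mul_comm u x]
        ring

lemma integral_one_sub_exp_mul_rpow_mul_exp {K s u : ℝ} (hK : K < 2) (hK1 : K ≠ 1) (hs : 0 < s)
    (hu : 0 < u) :
    ∫ r in Ioi 0, (1 - exp (-(r * s))) * (r ^ (-K) * exp (-(r * u)))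
      = Gamma (2 - K) / (K - 1) * ((u + s) ^ (K - 1) - u ^ (K - 1)) := by
  have hslice : ∀ v ∈ Ioc 0 s,
      ∫ r in Ioi 0, r * (r ^ (-K) * exp (-(r * u))) * exp (-(r * v))
        = Gamma (2 - K) * (u + v) ^ (K - 2) := fun v hv ↦ by
    have huv : 0 < u + v := add_pos hu hv.1
    rw [← (by ring : -(2 - K) = K - 2), rpow_neg huv.le, ← inv_rpow huv.le, ← one_div,
      mul_comm, ← integral_rpow_mul_exp_neg_mul_Ioi (by linarith) huv]
    refine setIntegral_congr_fun measurableSet_Ioi fun r (hr : 0 < r) ↦ ?_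
    rw [show 2 - K - 1 = -K + 1 by ring, rpow_add_one hr.ne',
      show -((u + v) * r) = -(r * u) + -(r * v) by ring, exp_add]
    ring
  rw [integral_one_sub_exp_neg_mul_eq hs (integrableOn_one_sub_exp_mul_rpow_mul_exp hK hs.le hu),
    setIntegral_congr_fun measurableSet_Ioc hslice, integral_const_mul,
    ← intervalIntegral.integral_of_le hs.le, intervalIntegral.integral_comp_add_left (· ^ (K - 2)),
    add_zero, integral_rpow (.inr ⟨fun h ↦ hK1 (by linarith), notMem_uIcc_of_lt hu (by linarith)⟩),
    show K - 2 + 1 = K - 1 by ring]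
  ring

lemma integral_rpow_add_sub_rpow {a : ℝ} (ha : -1 < a) (s t : ℝ) :
    ∫ u in (0 : ℝ)..t, ((u + s) ^ a - u ^ a)
      = ((t + s) ^ (a + 1) - s ^ (a + 1) - t ^ (a + 1)) / (a + 1) := by
  have hint : ∀ c d : ℝ, IntervalIntegrable (· ^ a) volume c d :=
    fun _ _ ↦ intervalIntegral.intervalIntegrable_rpow' ha
  have hshift : IntervalIntegrable (fun u ↦ (u + s) ^ a) volume 0 t := by
    simpa using (hint s (t + s)).comp_add_right s
  rw [intervalIntegral.integral_sub hshift (hint 0 t),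
    intervalIntegral.integral_comp_add_right (· ^ a), integral_rpow (.inl ha),
    integral_rpow (.inl ha), zero_add, zero_rpow (by linarith)]
  ring

theorem stmt_13 (K : ℝ) (hK : K ∈ Set.Ioo (1:ℝ) 2) (s t : ℝ) (hs : 0 < s) (ht : 0 < t) :
    ∫ r in Set.Ioi (0:ℝ),
        (1 - Real.exp (-(r * t))) * (1 - Real.exp (-(r * s))) * r ^ (-(1 + K))
      = (Real.Gamma (2 - K) / (K * (K - 1))) * ((t + s) ^ K - t ^ K - s ^ K) := by
  obtain ⟨hK1, hK2⟩ := hK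
  have hslice : ∀ u ∈ Ioc 0 t,
      ∫ r in Ioi 0, r * ((1 - exp (-(r * s))) * r ^ (-(1 + K))) * exp (-(r * u))
        = Gamma (2 - K) / (K - 1) * ((u + s) ^ (K - 1) - u ^ (K - 1)) := fun u hu ↦ by
    rw [← integral_one_sub_exp_mul_rpow_mul_exp hK2 hK1.ne' hs hu.1]
    refine setIntegral_congr_fun measurableSet_Ioi fun r (hr : 0 < r) ↦ ?_
    rw [show -K = -(1 + K) + 1 by ring, rpow_add_one hr.ne']
    ring
  simp only [mul_assoc]
  rw [integral_one_sub_exp_neg_mul_eq ht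
      (integrableOn_one_sub_exp_mul_one_sub_exp_mul_rpow (by linarith) hK2 ht.le hs.le),
    setIntegral_congr_fun measurableSet_Ioc hslice, integral_const_mul,
    ← intervalIntegral.integral_of_le ht.le, integral_rpow_add_sub_rpow (by linarith),
    sub_add_cancel]
  field_simp
  ring
end

section
/- For K ∈ (0,1) and s,t > 0: ∫₀^∞ (1-e^(-rt))(1-e^(-rs)) r^(-(1+K)) dr = (Γ(1-K)/K)·(t^K + s^K - (t+s)^K). -/
/-!
Since `(1 - e^{-a})(1 - e^{-b}) = (1 - e^{-a}) + (1 - e^{-b}) - (1 - e^{-(a+b)})`, the integral is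
`I(t) + I(s) - I(t + s)` with `I(t) = ∫₀^∞ (1 - e^{-rt}) r^{-(1+K)} dr`. Integrating by parts against
the antiderivative `-r^{-K}/K` of `r^{-(1+K)}` (the boundary terms vanish because `0 < K < 1`) gives
`I(t) = (t/K) ∫₀^∞ r^{-K} e^{-rt} dr = Γ(1 - K) t^K / K`.
-/

open Real MeasureTheory Filter Set Topology

lemma one_sub_exp_neg_mul_one_sub_exp_neg (a b : ℝ) :
    (1 - exp (-a)) * (1 - exp (-b)) = (1 - exp (-a)) + (1 - exp (-b)) - (1 - exp (-(a + b))) := by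
  rw [neg_add, exp_add]
  ring

lemma abs_one_sub_exp_neg_le_self {y : ℝ} (hy : 0 ≤ y) : |1 - exp (-y)| ≤ y := by
  rw [abs_of_nonneg (sub_nonneg.2 (exp_le_one_iff.2 (neg_nonpos.2 hy)))]
  linarith [one_sub_le_exp_neg y]

lemma abs_one_sub_exp_neg_le_one {y : ℝ} (hy : 0 ≤ y) : |1 - exp (-y)| ≤ 1 := by
  rw [abs_of_nonneg (sub_nonneg.2 (exp_le_one_iff.2 (neg_nonpos.2 hy)))]
  linarith [exp_pos (-y)]

section
variable {K t : ℝ}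

lemma integrableOn_one_sub_exp_mul_rpow (hK0 : 0 < K) (hK1 : K < 1) (ht : 0 ≤ t) :
    IntegrableOn (fun r : ℝ => (1 - exp (-(r * t))) * r ^ (-(1 + K))) (Ioi 0) := by
  have hmeas : AEStronglyMeasurable (fun r : ℝ => (1 - exp (-(r * t))) * r ^ (-(1 + K))) := by
    fun_prop
  rw [← Ioc_union_Ioi_eq_Ioi zero_le_one, integrableOn_union]
  constructor
  · have hdom : IntegrableOn (fun r : ℝ => t * r ^ (-K)) (Ioc 0 1) :=
      ((intervalIntegrable_iff_integrableOn_Ioc_of_le zero_le_one).1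
        (intervalIntegral.intervalIntegrable_rpow' (by linarith))).const_mul t
    refine hdom.mono' hmeas.restrict ?_
    filter_upwards [ae_restrict_mem measurableSet_Ioc] with r hr
    have hrK : r ^ (-K) = r * r ^ (-(1 + K)) := by
      rw [show -K = -(1 + K) + 1 by ring, rpow_add_one hr.1.ne', mul_comm]
    rw [norm_mul, norm_of_nonneg (rpow_nonneg hr.1.le _), hrK, ← mul_assoc, mul_comm t]
    exact mul_le_mul_of_nonneg_right (abs_one_sub_exp_neg_le_self (mul_nonneg hr.1.le ht))
      (rpow_nonneg hr.1.le _)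
  · refine (integrableOn_Ioi_rpow_of_lt (show -(1 + K) < -1 by linarith) zero_lt_one).mono'
      hmeas.restrict ?_
    filter_upwards [ae_restrict_mem measurableSet_Ioi] with r (hr : 1 < r)
    rw [norm_mul, norm_of_nonneg (rpow_nonneg (by linarith) _)]
    exact mul_le_of_le_one_left (rpow_nonneg (by linarith) _)
      (abs_one_sub_exp_neg_le_one (by nlinarith))

lemma tendsto_one_sub_exp_mul_rpow_nhdsGT_zero (hK : K < 1) (ht : 0 ≤ t) :
    Tendsto (fun r : ℝ => (1 - exp (-(r * t))) * r ^ (-K)) (𝓝[>] 0) (𝓝 0) := by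
  have hpow : Tendsto (fun r : ℝ => t * r ^ (1 - K)) (𝓝[>] 0) (𝓝 0) := by
    simpa [zero_rpow (sub_pos.2 hK).ne'] using
      (((continuous_rpow_const (sub_pos.2 hK).le).tendsto 0).mono_left
        nhdsWithin_le_nhds).const_mul t
  refine squeeze_zero_norm' ?_ hpow
  filter_upwards [self_mem_nhdsWithin] with r (hr : 0 < r)
  rw [norm_mul, norm_of_nonneg (rpow_nonneg hr.le _), show 1 - K = -K + 1 by ring,
    rpow_add_one hr.ne']
  calc |1 - exp (-(r * t))| * r ^ (-K) ≤ r * t * r ^ (-K) := by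
        gcongr
        exact abs_one_sub_exp_neg_le_self (mul_nonneg hr.le ht)
    _ = t * (r ^ (-K) * r) := by ring

lemma tendsto_one_sub_exp_mul_rpow_atTop (hK : 0 < K) (ht : 0 ≤ t) :
    Tendsto (fun r : ℝ => (1 - exp (-(r * t))) * r ^ (-K)) atTop (𝓝 0) := by
  refine squeeze_zero_norm' ?_ (tendsto_rpow_neg_atTop hK)
  filter_upwards [eventually_gt_atTop 0] with r hr
  rw [norm_mul, norm_of_nonneg (rpow_nonneg hr.le _)]
  exact mul_le_of_le_one_left (rpow_nonneg hr.le _)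
    (abs_one_sub_exp_neg_le_one (mul_nonneg hr.le ht))

lemma integral_one_sub_exp_mul_rpow (hK0 : 0 < K) (hK1 : K < 1) (ht : 0 < t) :
    ∫ r in Ioi 0, (1 - exp (-(r * t))) * r ^ (-(1 + K)) = Gamma (1 - K) / K * t ^ K := by
  set u : ℝ → ℝ := fun r => 1 - exp (-(r * t))
  set v : ℝ → ℝ := fun r => -K⁻¹ * r ^ (-K)
  have hu (r : ℝ) : HasDerivAt u (t * exp (-(r * t))) r :=
    (((hasDerivAt_mul_const t).neg.exp).const_sub 1).congr_deriv
      (by simp only [Pi.neg_apply]; ring)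
  have hv (r : ℝ) (hr : r ∈ Ioi 0) : HasDerivAt v (r ^ (-(1 + K))) r := by
    refine ((hasDerivAt_rpow_const (Or.inl (ne_of_gt hr))).const_mul (-K⁻¹)).congr_deriv ?_
    rw [show -K - 1 = -(1 + K) by ring]
    field_simp
  have huv_lim {l : Filter ℝ} (h : Tendsto (fun r => u r * r ^ (-K)) l (𝓝 0)) :
      Tendsto (u * v) l (𝓝 0) := by
    have := h.const_mul (-K⁻¹)
    rw [mul_zero] at this
    exact this.congr fun r => by simp only [Pi.mul_apply, v]; ring
  have hu'v : (fun r => t * exp (-(r * t))) * v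
      = fun r => -(t / K) * (r ^ ((1 - K) - 1) * exp (-(t * r))) := by
    ext r
    simp only [Pi.mul_apply, v, sub_sub_cancel_left, mul_comm r t]
    ring
  have hgamma : IntegrableOn (fun r : ℝ => r ^ ((1 - K) - 1) * exp (-(t * r))) (Ioi 0) :=
    .of_integral_ne_zero (by
      rw [integral_rpow_mul_exp_neg_mul_Ioi (sub_pos.2 hK1) ht]
      exact (mul_pos (by positivity) (Gamma_pos_of_pos (sub_pos.2 hK1))).ne')
  have hibp := integral_Ioi_mul_deriv_eq_deriv_mul (fun r _ => hu r) hv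
    (integrableOn_one_sub_exp_mul_rpow hK0 hK1 ht.le) (hu'v ▸ hgamma.const_mul _)
    (huv_lim (tendsto_one_sub_exp_mul_rpow_nhdsGT_zero hK1 ht.le))
    (huv_lim (tendsto_one_sub_exp_mul_rpow_atTop hK0 ht.le))
  have hgamma_eq : ∫ r in Ioi 0, t * exp (-(r * t)) * v r
      = -(t / K) * ((1 / t) ^ (1 - K) * Gamma (1 - K)) := by
    rw [← integral_rpow_mul_exp_neg_mul_Ioi (sub_pos.2 hK1) ht, ← integral_const_mul]
    exact congrArg _ (funext (congrFun hu'v))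
  rw [hibp, hgamma_eq, one_div, inv_rpow ht.le, ← rpow_neg ht.le, neg_sub, rpow_sub_one ht.ne']
  field_simp
  ring

end

theorem stmt_14 (K : ℝ) (hK : K ∈ Set.Ioo (0:ℝ) 1) (s t : ℝ) (hs : 0 < s) (ht : 0 < t) :
    ∫ r in Set.Ioi (0:ℝ),
        (1 - Real.exp (-(r * t))) * (1 - Real.exp (-(r * s))) * r ^ (-(1 + K))
      = (Real.Gamma (1 - K) / K) * (t ^ K + s ^ K - (t + s) ^ K) := by
  obtain ⟨hK0, hK1⟩ := hK
  have hint {x : ℝ} (hx : 0 < x) := integrableOn_one_sub_exp_mul_rpow hK0 hK1 hx.le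
  have hst : 0 < t + s := add_pos ht hs
  calc ∫ r in Ioi 0, (1 - exp (-(r * t))) * (1 - exp (-(r * s))) * r ^ (-(1 + K))
      = ∫ r in Ioi 0, ((1 - exp (-(r * t))) * r ^ (-(1 + K))
          + (1 - exp (-(r * s))) * r ^ (-(1 + K)))
          - (1 - exp (-(r * (t + s)))) * r ^ (-(1 + K)) := by
        congr 1 with r
        rw [one_sub_exp_neg_mul_one_sub_exp_neg, mul_add]
        ring
    _ = Gamma (1 - K) / K * t ^ K + Gamma (1 - K) / K * s ^ K
          - Gamma (1 - K) / K * (t + s) ^ K := by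
        rw [integral_sub _ (hint hst), integral_add (hint ht) (hint hs),
          integral_one_sub_exp_mul_rpow hK0 hK1 ht, integral_one_sub_exp_mul_rpow hK0 hK1 hs,
          integral_one_sub_exp_mul_rpow hK0 hK1 hst]
        exact (hint ht).add (hint hs)
    _ = Gamma (1 - K) / K * (t ^ K + s ^ K - (t + s) ^ K) := by ring
end
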